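/- arXiv:math/0204111 — 3 statements merged into one kernel-verified Lean document; each statement's English description precedes it below -/
import Mathlib

section
/- Let E be a Fréchet space (or complete normed space) and (C^•, d) a cochain complex of such spaces with continuous differentials. Suppose C^•_i (i ≥ 1) are closed subcomplexes such that for each p the family (C^p_i) is an unconditional Schauder basis of subspaces of C^p (every element is a unique unconditionally convergent sum of elements of the C^p_i with continuous projections). Then the reduced cohomology satisfies: ⊕_i H̄^p(C^•_i) is dense in H̄^p(C^•) and every element of H̄^p(C^•) is an unconditionally convergent sum of elements of the images of H̄^p(C^•_i). -/
/-!
A continuous map of complexes commutes with the projections onto the pieces of the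
Schauder decompositions, because applying it to the expansion `b = ∑ πB i b` yields an
expansion of `d₂ b` with terms in the `SC i`, which by uniqueness must be `∑ πC i (d₂ b)`.
Hence the components `πB i b` of a cocycle `b` are cocycles of the subcomplexes, and their
unconditionally convergent sum is `b` itself.
-/

theorem Submodule.mem_topologicalClosure_of_hasSum {R M ι : Type*} [Semiring R]
    [AddCommMonoid M] [Module R M] [TopologicalSpace M] [ContinuousAdd M]
    [ContinuousConstSMul R M] {p : Submodule R M} {f : ι → M} {x : M}
    (hf : ∀ i, f i ∈ p) (hx : HasSum f x) : x ∈ p.topologicalClosure :=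
  mem_closure_of_tendsto hx (Filter.Eventually.of_forall fun _ => p.sum_mem fun i _ => hf i)

section Projections

variable {R M N ι : Type*} [Semiring R]
  [AddCommMonoid M] [Module R M] [TopologicalSpace M]
  [AddCommMonoid N] [Module R N] [TopologicalSpace N]
  {SM : ι → Submodule R M} {SN : ι → Submodule R N}
  {πM : ι → M →L[R] M} {πN : ι → N →L[R] N}

theorem ContinuousLinearMap.map_proj_eq_proj_map (f : M →L[R] N)
    (hf : ∀ i, ∀ x ∈ SM i, f x ∈ SN i) (hπM : ∀ i x, πM i x ∈ SM i)
    (hπM_sum : ∀ x, HasSum (fun i => πM i x) x)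
    (hπN_uniq : ∀ (y : N) (g : ι → N), (∀ i, g i ∈ SN i) → HasSum g y → ∀ i, g i = πN i y)
    (x : M) (i : ι) : f (πM i x) = πN i (f x) :=
  hπN_uniq (f x) (fun i => f (πM i x)) (fun i => hf i _ (hπM i x)) ((hπM_sum x).mapL f) i

theorem ContinuousLinearMap.proj_mem_ker (f : M →L[R] N)
    (hf : ∀ i, ∀ x ∈ SM i, f x ∈ SN i) (hπM : ∀ i x, πM i x ∈ SM i)
    (hπM_sum : ∀ x, HasSum (fun i => πM i x) x)
    (hπN_uniq : ∀ (y : N) (g : ι → N), (∀ i, g i ∈ SN i) → HasSum g y → ∀ i, g i = πN i y)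
    {x : M} (hx : x ∈ LinearMap.ker f.toLinearMap) (i : ι) :
    πM i x ∈ SM i ⊓ LinearMap.ker f.toLinearMap := by
  refine ⟨hπM i x, ?_⟩
  change f (πM i x) = 0
  rw [f.map_proj_eq_proj_map hf hπM hπM_sum hπN_uniq, show f x = 0 from hx, map_zero]

end Projections

theorem stmt2_general {A B C : Type*}
    [AddCommGroup A] [Module ℂ A] [TopologicalSpace A]
    [AddCommGroup B] [Module ℂ B] [TopologicalSpace B] [IsTopologicalAddGroup B]
    [ContinuousSMul ℂ B]
    [AddCommGroup C] [Module ℂ C] [TopologicalSpace C]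
    (d₁ : A →L[ℂ] B) (d₂ : B →L[ℂ] C)
    (SB : ℕ → Submodule ℂ B) (SC : ℕ → Submodule ℂ C)
    (hd₂S : ∀ i, ∀ b ∈ SB i, d₂ b ∈ SC i)
    (πB : ℕ → (B →L[ℂ] B)) (hπB₁ : ∀ i b, πB i b ∈ SB i)
    (hπB₂ : ∀ b : B, HasSum (fun i => πB i b) b)
    (πC : ℕ → (C →L[ℂ] C))
    (hCuniq : ∀ (c : C) (f : ℕ → C), (∀ i, f i ∈ SC i) → HasSum f c →
      ∀ i, f i = πC i c) :
    (LinearMap.ker d₂.toLinearMap ≤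
      ((⨆ i, (SB i ⊓ LinearMap.ker d₂.toLinearMap)) ⊔
        (LinearMap.range d₁.toLinearMap).topologicalClosure).topologicalClosure) ∧
    (∀ b ∈ LinearMap.ker d₂.toLinearMap, ∃ f : ℕ → B,
      (∀ i, f i ∈ SB i ⊓ LinearMap.ker d₂.toLinearMap) ∧
      ∃ b' : B, HasSum f b' ∧
        b - b' ∈ (LinearMap.range d₁.toLinearMap).topologicalClosure) := by
  have hcocycle : ∀ b ∈ LinearMap.ker d₂.toLinearMap, ∀ i,
      πB i b ∈ SB i ⊓ LinearMap.ker d₂.toLinearMap :=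
    fun b hb => d₂.proj_mem_ker hd₂S hπB₁ hπB₂ hCuniq hb
  refine ⟨fun b hb => ?_, fun b hb => ⟨fun i => πB i b, hcocycle b hb, b, hπB₂ b, ?_⟩⟩
  · refine Submodule.mem_topologicalClosure_of_hasSum (fun i => ?_) (hπB₂ b)
    exact Submodule.mem_sup_left (Submodule.mem_iSup_of_mem i (hcocycle b hb i))
  · rw [sub_self]
    exact Submodule.zero_mem _

/-- Given a cochain complex (displayed around degree `p` as `A → B → C`) of
topological vector spaces with continuous differentials and closed subcomplexes
`(SA i, SB i, SC i)` forming in each degree an unconditional Schauder basis of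
subspaces (with continuous projections `π`), the reduced cohomology at the middle
degree is the "closed unconditional direct sum" of the reduced cohomologies of the
subcomplexes: the algebraic sum of the images is dense, and every class is an
unconditionally convergent sum of classes coming from the subcomplexes. -/
theorem stmt2 {A B C : Type*}
    [AddCommGroup A] [Module ℂ A] [TopologicalSpace A] [IsTopologicalAddGroup A]
    [ContinuousSMul ℂ A]
    [AddCommGroup B] [Module ℂ B] [TopologicalSpace B] [IsTopologicalAddGroup B]
    [ContinuousSMul ℂ B]
    [AddCommGroup C] [Module ℂ C] [TopologicalSpace C] [IsTopologicalAddGroup C]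
    [ContinuousSMul ℂ C]
    (d₁ : A →L[ℂ] B) (d₂ : B →L[ℂ] C) (hd : ∀ a, d₂ (d₁ a) = 0)
    (SA : ℕ → Submodule ℂ A) (SB : ℕ → Submodule ℂ B) (SC : ℕ → Submodule ℂ C)
    (hSA : ∀ i, IsClosed (SA i : Set A)) (hSB : ∀ i, IsClosed (SB i : Set B))
    (hSC : ∀ i, IsClosed (SC i : Set C))
    (hd₁S : ∀ i, ∀ a ∈ SA i, d₁ a ∈ SB i)
    (hd₂S : ∀ i, ∀ b ∈ SB i, d₂ b ∈ SC i)
    (πA : ℕ → (A →L[ℂ] A)) (hπA₁ : ∀ i a, πA i a ∈ SA i)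
    (hπA₂ : ∀ a : A, HasSum (fun i => πA i a) a)
    (hAuniq : ∀ (a : A) (f : ℕ → A), (∀ i, f i ∈ SA i) → HasSum f a →
      ∀ i, f i = πA i a)
    (πB : ℕ → (B →L[ℂ] B)) (hπB₁ : ∀ i b, πB i b ∈ SB i)
    (hπB₂ : ∀ b : B, HasSum (fun i => πB i b) b)
    (hBuniq : ∀ (b : B) (f : ℕ → B), (∀ i, f i ∈ SB i) → HasSum f b →
      ∀ i, f i = πB i b)
    (πC : ℕ → (C →L[ℂ] C)) (hπC₁ : ∀ i c, πC i c ∈ SC i)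
    (hπC₂ : ∀ c : C, HasSum (fun i => πC i c) c)
    (hCuniq : ∀ (c : C) (f : ℕ → C), (∀ i, f i ∈ SC i) → HasSum f c →
      ∀ i, f i = πC i c) :
    (LinearMap.ker d₂.toLinearMap ≤
      ((⨆ i, (SB i ⊓ LinearMap.ker d₂.toLinearMap)) ⊔
        (LinearMap.range d₁.toLinearMap).topologicalClosure).topologicalClosure) ∧
    (∀ b ∈ LinearMap.ker d₂.toLinearMap, ∃ f : ℕ → B,
      (∀ i, f i ∈ SB i ⊓ LinearMap.ker d₂.toLinearMap) ∧
      ∃ b' : B, HasSum f b' ∧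
        b - b' ∈ (LinearMap.range d₁.toLinearMap).topologicalClosure) :=
  stmt2_general d₁ d₂ SB SC hd₂S πB hπB₁ hπB₂ πC hCuniq
end

section
/- Let V be a complex vector space with a symmetric bilinear form φ, and let so_fin(V, φ) denote the Lie algebra of finite-rank endomorphisms A of V satisfying φ(Au, v) + φ(u, Av) = 0 for all u, v. If φ is nondegenerate (in the sense that for every nonzero u there is v with φ(u,v) ≠ 0) and V is infinite-dimensional, then so_fin(V, φ) is a simple Lie algebra. -/
/-!
The maps `wedge φ u w : v ↦ φ u v • w - φ w v • u` lie in `so_fin(V, φ)`, span it, and satisfy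
`⁅A, wedge φ u w⁆ = wedge φ (A u) w + wedge φ u (A w)` for every skew `A`.

Since `V` is infinite-dimensional, the orthogonal `K` of a finite-dimensional subspace is not
totally isotropic: otherwise `k ↦ φ k` would embed `K` into the dual of the finite-dimensional
`V ⧸ K`. Hence it contains a vector `c` with `φ c c = 1` (square roots exist in `ℂ`).

Let `x ≠ 0` lie in an ideal, with `x a ≠ 0`. Taking such a `c` orthogonal to the range of `x`
gives `x c = 0`, so `⁅wedge φ a c, x⁆ = -wedge φ (x a) c` lies in the ideal, and bracketing
with further wedges moves the two arguments to arbitrary vectors. So the ideal contains every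
wedge, hence all of `so_fin(V, φ)`.
-/

open LinearMap Submodule

namespace SoFin

variable {V : Type*} [AddCommGroup V] [Module ℂ V] (φ : V →ₗ[ℂ] V →ₗ[ℂ] ℂ)

/-- `u ∧ w` under the identification of `Λ² V` with `so(V, φ)`. -/
def wedge : V →ₗ[ℂ] V →ₗ[ℂ] Module.End ℂ V :=
  LinearMap.mk₂ ℂ (fun u w => (φ u).smulRight w - (φ w).smulRight u)
    (fun _ _ _ => by ext; simp; module) (fun _ _ _ => by ext; simp; module)
    (fun _ _ _ => by ext; simp; module) (fun _ _ _ => by ext; simp; module)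

@[simp]
lemma wedge_apply (u w v : V) : wedge φ u w v = φ u v • w - φ w v • u := rfl

lemma wedge_swap (u w : V) : wedge φ w u = -wedge φ u w := by
  ext; simp

@[simp]
lemma wedge_self (u : V) : wedge φ u u = 0 := by
  ext; simp

def IsSkew (A : Module.End ℂ V) : Prop := ∀ u v, φ (A u) v + φ u (A v) = 0

def soFin : Set (Module.End ℂ V) :=
  {A | FiniteDimensional ℂ (range A) ∧ IsSkew φ A}

variable {φ}

lemma isSkew_wedge (hsymm : ∀ u v, φ u v = φ v u) (u w : V) : IsSkew φ (wedge φ u w) := by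
  intro v₁ v₂
  simp only [wedge_apply, map_sub, map_smul, smul_eq_mul, LinearMap.sub_apply,
    LinearMap.smul_apply]
  rw [hsymm v₁ u, hsymm v₁ w]
  ring

lemma IsSkew.lie_wedge {A : Module.End ℂ V} (hA : IsSkew φ A) (u w : V) :
    ⁅A, wedge φ u w⁆ = wedge φ (A u) w + wedge φ u (A w) := by
  ext v
  have hu : φ u (A v) = -φ (A u) v := by linear_combination hA u v
  have hw : φ w (A v) = -φ (A w) v := by linear_combination hA w v
  simp only [Ring.lie_def, Module.End.mul_apply, LinearMap.sub_apply, LinearMap.add_apply,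
    wedge_apply, map_sub, map_smul, hu, hw]
  module

lemma IsSkew.apply_eq_zero (hnd : ∀ u : V, u ≠ 0 → ∃ v, φ u v ≠ 0) {A : Module.End ℂ V}
    (hA : IsSkew φ A) {c : V} (hc : ∀ v, φ c (A v) = 0) : A c = 0 := by
  by_contra h
  obtain ⟨v, hv⟩ := hnd (A c) h
  exact hv (by linear_combination hA c v - hc v)

lemma wedge_mem_soFin (hsymm : ∀ u v, φ u v = φ v u) (u w : V) : wedge φ u w ∈ soFin φ := by
  refine ⟨?_, isSkew_wedge hsymm u w⟩
  have hle : range (wedge φ u w) ≤ span ℂ {u, w} := by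
    rintro _ ⟨v, rfl⟩
    rw [wedge_apply]
    exact sub_mem (smul_mem _ _ (subset_span (by simp))) (smul_mem _ _ (subset_span (by simp)))
  have := FiniteDimensional.span_of_finite ℂ (Set.toFinite {u, w})
  exact Submodule.finiteDimensional_of_le hle

lemma apply_eq_zero_of_forall_apply_self_eq_zero (hsymm : ∀ u v, φ u v = φ v u)
    {K : Submodule ℂ V} (hK : ∀ k ∈ K, φ k k = 0) {k k' : V} (hk : k ∈ K) (hk' : k' ∈ K) :
    φ k k' = 0 := by
  have h := hK (k + k') (add_mem hk hk')
  simp only [map_add, LinearMap.add_apply, hK k hk, hK k' hk', hsymm k' k] at h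
  linear_combination h / 2

lemma finiteDimensional_of_isotropic (hnd : ∀ u : V, u ≠ 0 → ∃ v, φ u v ≠ 0)
    (K : Submodule ℂ V) [FiniteDimensional ℂ (V ⧸ K)] (hK : ∀ k ∈ K, ∀ k' ∈ K, φ k k' = 0) :
    FiniteDimensional ℂ V := by
  let Ψ : V ⧸ K →ₗ[ℂ] K →ₗ[ℂ] ℂ :=
    K.liftQ (φ.flip.compl₂ K.subtype) fun v hv => by ext k; exact hK k k.2 v hv
  have hΨ : Function.Injective Ψ.flip := by
    refine (injective_iff_map_eq_zero _).mpr fun k hk => ?_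
    by_contra hk0
    obtain ⟨v, hv⟩ := hnd k (by simpa using hk0)
    exact hv (LinearMap.congr_fun hk (K.mkQ v))
  have : FiniteDimensional ℂ K := FiniteDimensional.of_injective Ψ.flip hΨ
  exact Module.Finite.of_submodule_quotient K

lemma exists_unit_orthogonal (hinf : ¬ FiniteDimensional ℂ V) (hsymm : ∀ u v, φ u v = φ v u)
    (hnd : ∀ u : V, u ≠ 0 → ∃ v, φ u v ≠ 0) (U : Submodule ℂ V) [FiniteDimensional ℂ U] :
    ∃ c, φ c c = 1 ∧ ∀ u ∈ U, φ u c = 0 := by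
  let K := ker (φ.domRestrict U).flip
  have : FiniteDimensional ℂ (V ⧸ K) := (quotKerEquivRange _).symm.finiteDimensional
  obtain ⟨k, hk, hkk⟩ : ∃ k ∈ K, φ k k ≠ 0 := by
    by_contra! h
    exact hinf (finiteDimensional_of_isotropic hnd K
      fun k hk k' hk' => apply_eq_zero_of_forall_apply_self_eq_zero hsymm h hk hk')
  obtain ⟨r, hr⟩ := IsAlgClosed.exists_pow_nat_eq (φ k k) two_pos
  have hr0 : r ≠ 0 := by rintro rfl; exact hkk (by simp [← hr])
  refine ⟨r⁻¹ • k, ?_, fun u hu => ?_⟩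
  · simp only [map_smul, LinearMap.smul_apply, smul_eq_mul, ← hr]
    field_simp
  · have h := LinearMap.congr_fun (mem_ker.mp hk) ⟨u, hu⟩
    simp only [flip_apply, domRestrict_apply, LinearMap.zero_apply] at h
    simp [h]

lemma exists_dual_family (hsymm : ∀ u v, φ u v = φ v u)
    (hnd : ∀ u : V, u ≠ 0 → ∃ v, φ u v ≠ 0) (R : Submodule ℂ V) [FiniteDimensional ℂ R] :
    ∃ (n : ℕ) (e f : Fin n → V), ∀ r ∈ R, ∑ i, φ (f i) r • e i = r := by
  have hρ : Function.Surjective (φ.compl₂ R.subtype) := by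
    refine flip_injective_iff₂.mp <| (injective_iff_map_eq_zero _).mpr fun r hr => ?_
    by_contra hr0
    obtain ⟨v, hv⟩ := hnd r (by simpa using hr0)
    exact hv (by simpa [hsymm v] using LinearMap.congr_fun hr v)
  choose f hf using hρ
  let b := Module.finBasis ℂ R
  refine ⟨_, fun i => b i, fun i => f (b.coord i), fun r hr => ?_⟩
  have h := congrArg Subtype.val (b.sum_repr ⟨r, hr⟩)
  simp only [Submodule.coe_sum, Submodule.coe_smul] at h
  convert h using 3 with i
  exact LinearMap.congr_fun (hf (b.coord i)) ⟨r, hr⟩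

lemma IsSkew.sum_wedge_eq (hsymm : ∀ u v, φ u v = φ v u)
    (hnd : ∀ u : V, u ≠ 0 → ∃ v, φ u v ≠ 0) {A : Module.End ℂ V} (hA : IsSkew φ A) {n : ℕ}
    {e f : Fin n → V} (hef : ∀ v, ∑ i, φ (f i) (A v) • e i = A v) :
    ∑ i, wedge φ (e i) (A (f i)) = (2 : ℂ) • A := by
  ext v
  have hsnd : ∑ i, φ (A (f i)) v • e i = -A v := by
    rw [← hef v, ← Finset.sum_neg_distrib]
    refine Finset.sum_congr rfl fun i _ => ?_
    rw [eq_neg_of_add_eq_zero_left (hA (f i) v), neg_smul]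
  have hfst : ∑ i, φ (e i) v • A (f i) = A v := by
    simp only [← map_smul, ← map_sum]
    rw [← sub_eq_zero, ← map_sub]
    -- `v - ∑ i, φ (e i) v • f i` is orthogonal to the range of `A`
    refine hA.apply_eq_zero hnd fun w => ?_
    have h := congrArg (φ · v) (hef w)
    simp only [map_sum, map_smul, LinearMap.sum_apply, LinearMap.smul_apply,
      smul_eq_mul] at h
    simp only [map_sub, map_sum, map_smul, LinearMap.sub_apply, LinearMap.sum_apply,
      LinearMap.smul_apply, smul_eq_mul, hsymm v (A w), ← h, hsymm (e _) v, mul_comm, sub_self]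
  simp only [LinearMap.sum_apply, wedge_apply, Finset.sum_sub_distrib, hfst,
    hsnd, LinearMap.smul_apply]
  module

lemma mem_of_forall_wedge_mem (hsymm : ∀ u v, φ u v = φ v u)
    (hnd : ∀ u : V, u ≠ 0 → ∃ v, φ u v ≠ 0) (J : Submodule ℂ (Module.End ℂ V))
    (hJ : ∀ p q, wedge φ p q ∈ J) {A : Module.End ℂ V} (hA : A ∈ soFin φ) : A ∈ J := by
  have := hA.1
  obtain ⟨n, e, f, hef⟩ := exists_dual_family hsymm hnd (range A)
  have h := hA.2.sum_wedge_eq hsymm hnd fun v => hef _ (mem_range_self A v)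
  have hA' : A = (2 : ℂ)⁻¹ • ∑ i, wedge φ (e i) (A (f i)) := by
    rw [h, smul_smul]; norm_num
  rw [hA']
  exact J.smul_mem _ (J.sum_mem fun i _ => hJ _ _)

lemma exists_lie_ne_zero (hinf : ¬ FiniteDimensional ℂ V) (hsymm : ∀ u v, φ u v = φ v u)
    (hnd : ∀ u : V, u ≠ 0 → ∃ v, φ u v ≠ 0) :
    ∃ A ∈ soFin φ, ∃ B ∈ soFin φ, ⁅A, B⁆ ≠ 0 := by
  obtain ⟨c₁, h₁, -⟩ := exists_unit_orthogonal hinf hsymm hnd ⊥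
  obtain ⟨c₂, h₂, h₁₂⟩ := exists_unit_orthogonal hinf hsymm hnd (span ℂ {c₁})
  have : FiniteDimensional ℂ (span ℂ {c₁, c₂}) :=
    FiniteDimensional.span_of_finite ℂ (Set.toFinite _)
  obtain ⟨c₃, h₃, h₁₂₃⟩ := exists_unit_orthogonal hinf hsymm hnd (span ℂ {c₁, c₂})
  have h₁₂ := h₁₂ c₁ (mem_span_singleton_self c₁)
  have h₁₃ := h₁₂₃ c₁ (subset_span (by simp))
  have h₂₃ := h₁₂₃ c₂ (subset_span (by simp))
  refine ⟨wedge φ c₁ c₂, wedge_mem_soFin hsymm _ _, wedge φ c₂ c₃, wedge_mem_soFin hsymm _ _,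
    fun h => ?_⟩
  -- `⁅wedge φ c₁ c₂, wedge φ c₂ c₃⁆ c₁ = -c₃`
  have h := LinearMap.congr_fun h c₁
  simp [Ring.lie_def, h₁, h₂, h₁₂, h₁₃, h₂₃, hsymm c₂ c₁, hsymm c₃ c₁, hsymm c₃ c₂] at h
  simp [h] at h₃

section Ideal

variable (J : Submodule ℂ (Module.End ℂ V))

lemma exists_forall_wedge_mem (hJ : ∀ A ∈ soFin φ, ∀ x ∈ J, ⁅A, x⁆ ∈ J)
    (hinf : ¬ FiniteDimensional ℂ V) (hsymm : ∀ u v, φ u v = φ v u)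
    (hnd : ∀ u : V, u ≠ 0 → ∃ v, φ u v ≠ 0) {x : Module.End ℂ V} (hx : x ∈ soFin φ)
    (hxJ : x ∈ J) (hx0 : x ≠ 0) : ∃ b ≠ 0, ∀ q, wedge φ b q ∈ J := by
  obtain ⟨a, ha⟩ : ∃ a, x a ≠ 0 := by
    by_contra! h
    exact hx0 (LinearMap.ext h)
  have := hx.1
  obtain ⟨c, hcc, hc⟩ := exists_unit_orthogonal hinf hsymm hnd (range x)
  have hxc : x c = 0 :=
    hx.2.apply_eq_zero hnd fun v => by rw [hsymm]; exact hc _ (mem_range_self x v)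
  have hcb : φ c (x a) = 0 := by rw [hsymm]; exact hc _ (mem_range_self x a)
  have hbc : wedge φ (x a) c ∈ J := by
    have hlie : ⁅wedge φ a c, x⁆ = -wedge φ (x a) c := by
      have h := hx.2.lie_wedge a c
      rw [hxc, map_zero, add_zero] at h
      rw [← h, Ring.lie_def, Ring.lie_def, neg_sub]
    have h := J.neg_mem (hJ _ (wedge_mem_soFin hsymm a c) x hxJ)
    rwa [hlie, neg_neg] at h
  refine ⟨x a, ha, fun q => ?_⟩
  have hlie : ⁅wedge φ c q, wedge φ (x a) c⁆ = wedge φ (x a) q - φ q c • wedge φ (x a) c := by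
    rw [(isSkew_wedge hsymm c q).lie_wedge, wedge_apply, wedge_apply, hcb, hcc]
    simp
  have h := J.add_mem (hJ _ (wedge_mem_soFin hsymm c q) _ hbc) (J.smul_mem (φ q c) hbc)
  rwa [hlie, sub_add_cancel] at h

lemma wedge_mem_of_forall_wedge_mem (hJ : ∀ A ∈ soFin φ, ∀ x ∈ J, ⁅A, x⁆ ∈ J)
    (hsymm : ∀ u v, φ u v = φ v u) (hnd : ∀ u : V, u ≠ 0 → ∃ v, φ u v ≠ 0) {b : V}
    (hb : b ≠ 0) (hbJ : ∀ q, wedge φ b q ∈ J) (p q : V) : wedge φ p q ∈ J := by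
  obtain ⟨e, heb⟩ : ∃ e, φ e b = 1 := by
    obtain ⟨e₀, he₀⟩ := hnd b hb
    refine ⟨(φ b e₀)⁻¹ • e₀, ?_⟩
    simp only [map_smul, LinearMap.smul_apply, smul_eq_mul, hsymm e₀ b]
    exact inv_mul_cancel₀ he₀
  have hmove : ∀ p q, wedge φ (p - φ p b • e) q ∈ J := by
    intro p q
    have h := J.sub_mem (hJ _ (wedge_mem_soFin hsymm e p) _ (hbJ q)) (hbJ (wedge φ e p q))
    rwa [(isSkew_wedge hsymm e p).lie_wedge, wedge_apply, heb, one_smul,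
      add_sub_cancel_right] at h
  have he : ∀ q, wedge φ e q ∈ J := by
    intro q
    have h := J.neg_mem (hmove q e)
    rwa [map_sub, map_smul, LinearMap.sub_apply, LinearMap.smul_apply, wedge_self, smul_zero,
      sub_zero, ← wedge_swap] at h
  simpa using J.add_mem (hmove p q) (J.smul_mem (φ p b) (he q))

lemma soFin_subset_of_mem_of_ne_zero (hJ : ∀ A ∈ soFin φ, ∀ x ∈ J, ⁅A, x⁆ ∈ J)
    (hinf : ¬ FiniteDimensional ℂ V) (hsymm : ∀ u v, φ u v = φ v u)
    (hnd : ∀ u : V, u ≠ 0 → ∃ v, φ u v ≠ 0) {x : Module.End ℂ V} (hx : x ∈ soFin φ)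
    (hxJ : x ∈ J) (hx0 : x ≠ 0) : soFin φ ⊆ J := by
  obtain ⟨b, hb, hbJ⟩ := exists_forall_wedge_mem J hJ hinf hsymm hnd hx hxJ hx0
  exact fun A => mem_of_forall_wedge_mem hsymm hnd J
    (wedge_mem_of_forall_wedge_mem J hJ hsymm hnd hb hbJ)

end Ideal

end SoFin

/-- If `V` is an infinite-dimensional complex vector space with a nondegenerate
symmetric bilinear form `φ`, then the Lie algebra `so_fin(V, φ)` of finite-rank
endomorphisms `A` with `φ(Au,v) + φ(u,Av) = 0` is simple: it is non-abelian and
has no ideals other than `{0}` and itself. -/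
theorem stmt3 {V : Type*} [AddCommGroup V] [Module ℂ V]
    (hinf : ¬ FiniteDimensional ℂ V)
    (φ : V →ₗ[ℂ] V →ₗ[ℂ] ℂ)
    (hsymm : ∀ u v, φ u v = φ v u)
    (hnd : ∀ u : V, u ≠ 0 → ∃ v, φ u v ≠ 0)
    (gfin : Set (Module.End ℂ V))
    (hgfin : gfin = {A : Module.End ℂ V |
      FiniteDimensional ℂ ↥(LinearMap.range A) ∧
      ∀ u v, φ (A u) v + φ u (A v) = 0}) :
    (∃ A ∈ gfin, ∃ B ∈ gfin, ⁅A, B⁆ ≠ 0) ∧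
    (∀ I : Set (Module.End ℂ V), I ⊆ gfin →
      (0 : Module.End ℂ V) ∈ I →
      (∀ x ∈ I, ∀ y ∈ I, x + y ∈ I) →
      (∀ (c : ℂ), ∀ x ∈ I, c • x ∈ I) →
      (∀ A ∈ gfin, ∀ x ∈ I, ⁅A, x⁆ ∈ I) →
      I = {0} ∨ I = gfin) := by
  obtain rfl : gfin = SoFin.soFin φ := hgfin
  refine ⟨SoFin.exists_lie_ne_zero hinf hsymm hnd, fun I hI h0 hadd hsmul hlie => ?_⟩
  let J : Submodule ℂ (Module.End ℂ V) :=
    { carrier := I, add_mem' := fun hx hy => hadd _ hx _ hy, zero_mem' := h0,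
      smul_mem' := hsmul }
  by_cases hI0 : ∀ x ∈ I, x = 0
  · exact Or.inl (Set.eq_singleton_iff_unique_mem.mpr ⟨h0, hI0⟩)
  push Not at hI0
  obtain ⟨x, hxI, hx0⟩ := hI0
  exact Or.inr (hI.antisymm
    (SoFin.soFin_subset_of_mem_of_ne_zero J hlie hinf hsymm hnd (hI hxI) hxI hx0))
end

section
/- Let V be a finite-dimensional complex vector space with symmetric nondegenerate bilinear form φ, dim V > 4. Then the orthogonal Lie algebra so(V, φ) = {A ∈ End(V) : φ(Au,v) + φ(u,Av) = 0} is a simple Lie algebra. -/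
/-!
Choosing a `φ`-orthonormal basis (possible over `ℂ` since every scalar is a square) identifies
`so(V, φ)` with the Lie algebra `so(n)` of skew-symmetric matrices, spanned by the
`B_ij = E_ij - E_ji`. For `i ≠ j`, the operator `-(ad B_ij)²` is the projection onto the span of
those `B_st` for which exactly one of `s, t` lies in `{i, j}`, and it preserves every ideal.
Given a nonzero `x` in an ideal with `x_pq ≠ 0`, three further indices `j, l, m` (this is where
`n ≥ 5` is used) give four such projections whose composite sends `x` to `x_pq • B_pq`.
Brackets `[B_ij, B_jk] = B_ik` then put every `B_ik`, hence all of `so(n)`, into the ideal.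
-/

theorem LieAlgebra.IsSimple.of_lieEquiv {R L L' : Type*} [CommRing R] [LieRing L]
    [LieAlgebra R L] [LieRing L'] [LieAlgebra R L'] (h : LieAlgebra.IsSimple R L)
    (e : L ≃ₗ⁅R⁆ L') : LieAlgebra.IsSimple R L' where
  eq_bot_or_eq_top I := by
    rcases h.eq_bot_or_eq_top (I.comap e.toLieHom) with hI | hI
    · refine Or.inl ((LieSubmodule.eq_bot_iff I).mpr fun x hx => ?_)
      have : e.symm x ∈ I.comap e.toLieHom := by simpa using hx
      rw [hI, LieSubmodule.mem_bot] at this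
      simpa using this
    · refine Or.inr (eq_top_iff.mpr fun x _ => ?_)
      have : e.symm x ∈ I.comap e.toLieHom := by rw [hI]; exact LieSubmodule.mem_top _
      simpa using this
  non_abelian hab := h.non_abelian ((lie_abelian_iff_equiv_lie_abelian e).mpr hab)

namespace LieAlgebra.Orthogonal

open Matrix

variable {ι K : Type*} [DecidableEq ι] [Fintype ι] [Field K]

lemma so_apply_swap {A : Matrix ι ι K} (hA : A ∈ so ι K) (i j : ι) : A j i = -A i j := by
  rw [mem_so] at hA
  simpa using congrFun (congrFun hA i) j

lemma so_apply_self [NeZero (2 : K)] {A : Matrix ι ι K} (hA : A ∈ so ι K) (i : ι) :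
    A i i = 0 := by
  have h : (2 : K) * A i i = 0 := by linear_combination so_apply_swap hA i i
  simpa [two_ne_zero] using h

variable (K) in
def skewSingle (i j : ι) : so ι K :=
  ⟨single i j 1 - single j i 1, by rw [mem_so]; simp [transpose_sub, transpose_single]⟩

lemma skewSingle_apply (i j u v : ι) :
    (skewSingle K i j : Matrix ι ι K) u v =
      (if u = i ∧ v = j then 1 else 0) - (if u = j ∧ v = i then 1 else 0) := by
  simp [skewSingle, single_apply, eq_comm]

lemma skewSingle_swap (i j : ι) : skewSingle K j i = -skewSingle K i j := by
  ext1; simp [skewSingle]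

lemma skewSingle_self (i : ι) : skewSingle K i i = 0 := by
  ext1; simp [skewSingle]

lemma skewSingle_ne_zero {i j : ι} (hij : i ≠ j) : skewSingle K i j ≠ 0 := by
  intro h
  have := congrArg (fun x : so ι K => (x : Matrix ι ι K) i j) h
  simp [skewSingle_apply, hij] at this

lemma skewSingle_mul_apply (i j u v : ι) (A : Matrix ι ι K) :
    ((skewSingle K i j : Matrix ι ι K) * A) u v =
      (if u = i then A j v else 0) - (if u = j then A i v else 0) := by
  simp [skewSingle, sub_mul, single_apply, Matrix.mul_apply, ite_and, eq_comm]

lemma mul_skewSingle_apply (i j u v : ι) (A : Matrix ι ι K) :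
    (A * (skewSingle K i j : Matrix ι ι K)) u v =
      (if v = j then A u i else 0) - (if v = i then A u j else 0) := by
  simp [skewSingle, mul_sub, single_apply, Matrix.mul_apply, ite_and, eq_comm]

lemma lie_skewSingle_skewSingle {i j k : ι} (hij : i ≠ j) (hjk : j ≠ k) (hik : i ≠ k) :
    ⁅skewSingle K i j, skewSingle K j k⁆ = skewSingle K i k := by
  ext u v
  simp only [LieSubalgebra.coe_bracket, Ring.lie_def, Matrix.sub_apply, skewSingle_mul_apply,
    skewSingle_apply]
  grind

lemma sum_smul_skewSingle (x : so ι K) :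
    ∑ i, ∑ j, x.1 i j • skewSingle K i j = (2 : K) • x := by
  ext u v
  simp only [AddSubmonoidClass.coe_finsetSum, SetLike.val_smul, Matrix.sum_apply,
    Matrix.smul_apply, skewSingle_apply, smul_eq_mul, mul_sub, mul_ite, mul_one, mul_zero, ite_and,
    Finset.sum_sub_distrib, Finset.sum_ite_eq, Finset.mem_univ, if_true, Finset.sum_ite_irrel,
    Finset.sum_const_zero]
  linear_combination -so_apply_swap x.2 u v

lemma exists_offDiag_apply_ne_zero [NeZero (2 : K)] {x : so ι K} (hx : x ≠ 0) :
    ∃ p q, p ≠ q ∧ x.1 p q ≠ 0 := by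
  by_contra! h
  refine hx (Subtype.ext (Matrix.ext fun p q => ?_))
  by_cases hpq : p = q
  · subst hpq; exact so_apply_self x.2 p
  · exact h p q hpq

def crossProj (i j : ι) (x : so ι K) : so ι K :=
  -⁅skewSingle K i j, ⁅skewSingle K i j, x⁆⁆

lemma crossProj_apply [NeZero (2 : K)] {i j : ι} (hij : i ≠ j) (x : so ι K) (u v : ι) :
    (crossProj i j x : Matrix ι ι K) u v =
      if Xor (u = i ∨ u = j) (v = i ∨ v = j) then x.1 u v else 0 := by
  have hdiag := so_apply_self x.2
  have hswap := so_apply_swap x.2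
  simp only [crossProj, LieSubalgebra.coe_bracket, NegMemClass.coe_neg, Ring.lie_def, mul_sub,
    sub_mul, Matrix.neg_apply, Matrix.sub_apply, skewSingle_mul_apply, mul_skewSingle_apply]
  split_ifs <;> grind [Xor]

lemma crossProj_mem (I : LieIdeal K (so ι K)) (i j : ι) {x : so ι K} (hx : x ∈ I) :
    crossProj i j x ∈ I :=
  neg_mem (I.lie_mem (I.lie_mem hx))

lemma crossProj_isolate [NeZero (2 : K)] {p q j l m : ι} (h : [p, q, j, l, m].Nodup)
    (x : so ι K) :
    crossProj p m (crossProj p l (crossProj q l (crossProj p j x))) =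
      x.1 p q • skewSingle K p q := by
  simp only [List.nodup_cons, List.mem_cons, List.not_mem_nil, List.nodup_nil] at h
  have hswap := so_apply_swap x.2
  ext s t
  rw [crossProj_apply (by grind), crossProj_apply (by grind), crossProj_apply (by grind),
    crossProj_apply (by grind)]
  simp only [SetLike.val_smul, Matrix.smul_apply, skewSingle_apply, smul_eq_mul]
  split_ifs <;> grind [Xor]

variable {I : LieIdeal K (so ι K)}

lemma exists_skewSingle_mem [NeZero (2 : K)] (hcard : 5 ≤ Fintype.card ι) (hI : I ≠ ⊥) :
    ∃ p q, p ≠ q ∧ skewSingle K p q ∈ I := by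
  obtain ⟨x, hxI, hx⟩ :=
    Submodule.exists_mem_ne_zero_of_ne_bot ((LieSubmodule.toSubmodule_eq_bot I).not.mpr hI)
  obtain ⟨p, q, hpq, hxpq⟩ := exists_offDiag_apply_ne_zero hx
  have hcompl : 2 < ({p, q}ᶜ : Finset ι).card := by
    have := Finset.card_le_two (a := p) (b := q)
    rw [Finset.card_compl]; omega
  obtain ⟨j, l, m, hj, hl, hm, hjl, hjm, hlm⟩ := Finset.two_lt_card_iff.mp hcompl
  simp only [Finset.mem_compl, Finset.mem_insert, Finset.mem_singleton, not_or] at hj hl hm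
  have hnodup : [p, q, j, l, m].Nodup := by
    simp only [List.nodup_cons, List.mem_cons, List.not_mem_nil]; grind
  have hy := crossProj_mem I p m <| crossProj_mem I p l <| crossProj_mem I q l <|
    crossProj_mem I p j hxI
  rw [crossProj_isolate hnodup] at hy
  exact ⟨p, q, hpq, by simpa [hxpq] using I.smul_mem (x.1 p q)⁻¹ hy⟩

lemma skewSingle_mem_of_skewSingle_mem {p q : ι} (hpq : p ≠ q) (h : skewSingle K p q ∈ I)
    (i k : ι) : skewSingle K i k ∈ I := by
  have hp : ∀ k, skewSingle K p k ∈ I := by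
    intro k
    by_cases hkq : k = q
    · rwa [hkq]
    by_cases hkp : k = p
    · rw [hkp, skewSingle_self]; exact zero_mem I
    rw [← lie_skewSingle_skewSingle hpq (Ne.symm hkq) (Ne.symm hkp)]
    exact lie_mem_left K _ I _ _ h
  by_cases hip : i = p
  · rw [hip]; exact hp k
  by_cases hkp : k = p
  · rw [hkp, skewSingle_swap]; exact neg_mem (hp i)
  by_cases hik : i = k
  · rw [hik, skewSingle_self]; exact zero_mem I
  rw [← lie_skewSingle_skewSingle hip (Ne.symm hkp) hik]
  exact I.lie_mem (hp k)

lemma eq_top_of_forall_skewSingle_mem [NeZero (2 : K)] (h : ∀ i k, skewSingle K i k ∈ I) :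
    I = ⊤ := by
  refine eq_top_iff.mpr fun x _ => ?_
  have hx : (2 : K) • x ∈ I := by
    rw [← sum_smul_skewSingle]
    exact sum_mem fun i _ => sum_mem fun k _ => I.smul_mem _ (h i k)
  simpa [two_ne_zero] using I.smul_mem (2 : K)⁻¹ hx

theorem isSimple_so [NeZero (2 : K)] (hcard : 5 ≤ Fintype.card ι) : IsSimple K (so ι K) where
  eq_bot_or_eq_top I := by
    refine or_iff_not_imp_left.mpr fun hI => ?_
    obtain ⟨p, q, hpq, h⟩ := exists_skewSingle_mem hcard hI
    exact eq_top_of_forall_skewSingle_mem (skewSingle_mem_of_skewSingle_mem hpq h)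
  non_abelian h := by
    obtain ⟨i, j, k, hij, hik, hjk⟩ := (Fintype.two_lt_card_iff (α := ι)).mp (by omega)
    apply skewSingle_ne_zero (K := K) hik
    rw [← lie_skewSingle_skewSingle hij hjk hik]
    exact trivial_lie_zero _ _ _ _

end LieAlgebra.Orthogonal

open LinearMap Module

theorem LinearMap.BilinForm.exists_basis_toMatrix₂_eq_one {K V : Type*} [Field K]
    [IsAlgClosed K] [NeZero (2 : K)] [AddCommGroup V] [Module K V] [FiniteDimensional K V]
    {B : LinearMap.BilinForm K V} (hB : LinearMap.IsSymm B) (hnd : B.Nondegenerate) :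
    ∃ b : Basis (Fin (finrank K V)) K V, toMatrix₂ b b B = 1 := by
  have : Invertible (2 : K) := invertibleOfNonzero two_ne_zero
  obtain ⟨v, hv⟩ := exists_orthogonal_basis hB
  have hvv : ∀ i, B (v i) (v i) ≠ 0 := hv.not_isOrtho_basis_self_of_separatingLeft hnd.1
  choose z hz using fun i => IsAlgClosed.exists_pow_nat_eq (B (v i) (v i)) two_pos
  have hz0 : ∀ i, z i ≠ 0 := fun i h => hvv i (by rw [← hz i, h, zero_pow two_ne_zero])
  refine ⟨v.unitsSMul fun i => (Units.mk0 (z i) (hz0 i))⁻¹, Matrix.ext fun i j => ?_⟩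
  rw [toMatrix₂_apply, Basis.unitsSMul_apply, Basis.unitsSMul_apply]
  by_cases hij : i = j
  · subst hij
    have := hz0 i
    simp [Units.smul_def, ← hz i]
    field_simp
  · simp [Units.smul_def, hij, hv hij]

section

attribute [local instance 100] LieRing.ofAssociativeRing

theorem LinearMap.BilinForm.map_skewAdjointLieSubalgebra_toMatrixAlgEquiv {R M ι : Type*}
    [CommRing R] [AddCommGroup M] [Module R M] [Fintype ι] [DecidableEq ι]
    (B : LinearMap.BilinForm R M) (b : Basis ι R M) :
    (skewAdjointLieSubalgebra B).map
        (AlgEquiv.toLieEquiv (A₁ := Module.End R M) (toMatrixAlgEquiv b)).toLieHom =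
      skewAdjointMatricesLieSubalgebra (toMatrix₂ b b B) := by
  have key : ∀ A : Matrix ι ι R, Matrix.toLin b b A ∈ skewAdjointLieSubalgebra B ↔
      A ∈ skewAdjointMatricesLieSubalgebra (toMatrix₂ b b B) := by
    intro A
    conv_lhs => rw [← Matrix.toLinearMap₂_toMatrix₂ b b B]
    rw [mem_skewAdjointMatricesLieSubalgebra, mem_skewAdjointMatricesSubmodule,
      Matrix.IsSkewAdjoint, ← isAdjointPair_toLinearMap₂ b b, map_neg, LinearMap.coe_neg]
    exact LinearMap.mem_skewAdjointSubmodule _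
  refine LieSubalgebra.ext _ _ fun A => ?_
  rw [LieSubalgebra.mem_map]
  constructor
  · rintro ⟨f, hf, rfl⟩
    rwa [← Matrix.toLin_toMatrix b b f, key] at hf
  · exact fun hA => ⟨Matrix.toLin b b A, (key A).mpr hA, LinearMap.toMatrix_toLin b b A⟩

/-- For a finite-dimensional complex vector space `V` with `dim V > 4` and a
symmetric nondegenerate bilinear form `φ`, the orthogonal Lie algebra
`so(V, φ) = {A : φ(Au,v) + φ(u,Av) = 0}` is simple. -/
theorem stmt18 {V : Type*} [AddCommGroup V] [Module ℂ V] [FiniteDimensional ℂ V]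
    (hdim : 4 < Module.finrank ℂ V)
    (φ : LinearMap.BilinForm ℂ V)
    (hsymm : ∀ u v, φ u v = φ v u)
    (hnd : φ.Nondegenerate) :
    LieAlgebra.IsSimple ℂ ↥(skewAdjointLieSubalgebra φ) := by
  obtain ⟨b, hb⟩ := LinearMap.BilinForm.exists_basis_toMatrix₂_eq_one ⟨hsymm⟩ hnd
  have hcard : 5 ≤ Fintype.card (Fin (finrank ℂ V)) := by rwa [Fintype.card_fin]
  have hmap := φ.map_skewAdjointLieSubalgebra_toMatrixAlgEquiv b
  rw [hb] at hmap
  exact (LieAlgebra.Orthogonal.isSimple_so hcard).of_lieEquiv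
    (LieEquiv.ofSubalgebras _ _ _ hmap).symm

end
end
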